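/- arXiv:2501.15345 — 3 statements merged into one kernel-verified Lean document; each statement's English description precedes it below -/
import Mathlib

section
/- Let F₁ = ⋃_{i∈D₁} C_{1i} and F₂ = ⋃_{j∈D₂} C_{2j}, where D₁, D₂ are finite nonempty index sets and each C_{1i}, C_{2j} ⊆ ℝⁿ is a compact convex set. Set T_L = clconv(F₁ ∩ F₂) and T_R = clconv(F₁) ∩ clconv(F₂). Then T_L = T_R if and only if every extreme point of T_R is an extreme point of C_{1p} ∩ C_{2q} for some pair (p,q) ∈ D₁ × D₂. -/
/-!
In finite dimension the convex hull of a compact set is compact (Carathéodory: it is the image of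
`stdSimplex × Kⁿ⁺¹` under `(w, z) ↦ ∑ wᵢ zᵢ`), so all closures in the statement can be dropped.
If `conv (F₁ ∩ F₂) = conv F₁ ∩ conv F₂`, every extreme point of the latter lies in `F₁ ∩ F₂`,
hence in some `C₁ₚ ∩ C₂_q`, where it stays extreme. Conversely, if the extreme points of
`conv F₁ ∩ conv F₂` all lie in `F₁ ∩ F₂`, Krein–Milman gives `conv F₁ ∩ conv F₂ ⊆ conv (F₁ ∩ F₂)`.
-/

open Set Module

section Caratheodory

variable {E : Type*} [AddCommGroup E] [Module ℝ E]

lemma exists_stdSimplex_sum_smul_eq_of_card_le {ι : Type*} [Fintype ι] {m : ℕ}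
    (hm : Fintype.card ι ≤ m) {w : ι → ℝ} (hw₀ : ∀ i, 0 ≤ w i) (hw₁ : ∑ i, w i = 1)
    (z : ι → E) :
    ∃ W ∈ stdSimplex ℝ (Fin m), ∃ Z : Fin m → E,
      (∀ j, Z j ∈ range z) ∧ ∑ j, W j • Z j = ∑ i, w i • z i := by
  classical
  have : Nonempty ι := by
    by_contra h
    simp [not_nonempty_iff.1 h] at hw₁
  obtain ⟨e⟩ := Function.Embedding.nonempty_of_card_le (hm.trans_eq (Fintype.card_fin m).symm)
  set W := Function.extend e w 0
  have hW_off : ∀ j ∉ range e, W j = 0 := fun j hj =>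
    Function.extend_apply' _ _ _ (by simpa using hj)
  have hW_on : ∀ i, W (e i) = w i := e.injective.extend_apply w 0
  refine ⟨W, ⟨fun j => ?_, ?_⟩, z ∘ Function.invFun e, fun j => mem_range_self _, ?_⟩
  · by_cases hj : j ∈ range e
    · obtain ⟨i, rfl⟩ := hj
      rw [hW_on]; exact hw₀ i
    · rw [hW_off j hj]
  · rw [← hw₁]
    exact (Fintype.sum_of_injective e e.injective w W hW_off fun i => (hW_on i).symm).symm
  · refine (Fintype.sum_of_injective e e.injective _ _ (fun j hj => ?_) fun i => ?_).symm
    · rw [hW_off j hj, zero_smul]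
    · rw [hW_on, Function.comp_apply, Function.leftInverse_invFun e.injective]

variable [FiniteDimensional ℝ E]

lemma convexHull_eq_image_stdSimplex (s : Set E) :
    convexHull ℝ s = (fun p : (Fin (finrank ℝ E + 1) → ℝ) × (Fin (finrank ℝ E + 1) → E) =>
      ∑ j, p.1 j • p.2 j) '' (stdSimplex ℝ _ ×ˢ univ.pi fun _ => s) := by
  refine Subset.antisymm (fun x hx => ?_) ?_
  · obtain ⟨ι, _, z, w, hzs, hz, hw₀, hw₁, rfl⟩ := eq_pos_convex_span_of_mem_convexHull hx
    have hcard : Fintype.card ι ≤ finrank ℝ E + 1 :=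
      hz.card_le_finrank_succ.trans (Nat.succ_le_succ (Submodule.finrank_le _))
    obtain ⟨W, hW, Z, hZ, hsum⟩ :=
      exists_stdSimplex_sum_smul_eq_of_card_le hcard (fun i => (hw₀ i).le) hw₁ z
    exact ⟨(W, Z), ⟨hW, fun j _ => hzs (hZ j)⟩, hsum⟩
  · rintro _ ⟨⟨W, Z⟩, ⟨⟨hW₀, hW₁⟩, hZ⟩, rfl⟩
    exact mem_convexHull_of_exists_fintype W Z hW₀ hW₁ (fun j => hZ j (mem_univ j)) rfl

end Caratheodory

section

variable {E : Type*} [AddCommGroup E] [Module ℝ E] [FiniteDimensional ℝ E] [TopologicalSpace E]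
  [ContinuousAdd E] [ContinuousSMul ℝ E]

theorem IsCompact.convexHull {s : Set E} (hs : IsCompact s) : IsCompact (convexHull ℝ s) := by
  rw [convexHull_eq_image_stdSimplex]
  exact ((isCompact_stdSimplex ℝ _).prod (isCompact_univ_pi fun _ => hs)).image <|
    continuous_finsetSum _ fun j _ =>
      ((continuous_apply j).comp continuous_fst).smul ((continuous_apply j).comp continuous_snd)

end

section

variable {E : Type*} [AddCommGroup E] [Module ℝ E] [FiniteDimensional ℝ E] [TopologicalSpace E]
  [T2Space E] [IsTopologicalAddGroup E] [ContinuousSMul ℝ E] [LocallyConvexSpace ℝ E]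

theorem convexHull_inter_eq_inter_convexHull_iff {K₁ K₂ : Set E} (hK₁ : IsCompact K₁)
    (hK₂ : IsCompact K₂) :
    convexHull ℝ (K₁ ∩ K₂) = convexHull ℝ K₁ ∩ convexHull ℝ K₂ ↔
      (convexHull ℝ K₁ ∩ convexHull ℝ K₂).extremePoints ℝ ⊆ K₁ ∩ K₂ := by
  refine ⟨fun h => h ▸ extremePoints_convexHull_subset, fun h => ?_⟩
  refine (subset_inter (convexHull_mono inter_subset_left)
    (convexHull_mono inter_subset_right)).antisymm ?_
  have hT : IsCompact (convexHull ℝ K₁ ∩ convexHull ℝ K₂) :=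
    hK₁.convexHull.inter_right hK₂.convexHull.isClosed
  calc convexHull ℝ K₁ ∩ convexHull ℝ K₂
      = closure (convexHull ℝ ((convexHull ℝ K₁ ∩ convexHull ℝ K₂).extremePoints ℝ)) :=
        (closure_convexHull_extremePoints hT
          ((convex_convexHull ℝ K₁).inter (convex_convexHull ℝ K₂))).symm
    _ ⊆ closure (convexHull ℝ (K₁ ∩ K₂)) := closure_mono (convexHull_mono h)
    _ = convexHull ℝ (K₁ ∩ K₂) := (hK₁.inter_right hK₂.isClosed).convexHull.isClosed.closure_eq

end

lemma exists_mem_extremePoints_inter_iff {E : Type*} [AddCommGroup E] [Module ℝ E]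
    {ι κ : Type*} {C₁ : ι → Set E} {C₂ : κ → Set E} {T : Set E}
    (hT : ∀ p q, C₁ p ∩ C₂ q ⊆ T) {x : E} (hx : x ∈ T.extremePoints ℝ) :
    (∃ p q, x ∈ (C₁ p ∩ C₂ q).extremePoints ℝ) ↔ x ∈ (⋃ i, C₁ i) ∩ ⋃ j, C₂ j := by
  simp only [mem_inter_iff, mem_iUnion]
  refine ⟨fun ⟨p, q, hpq⟩ => ⟨⟨p, hpq.1.1⟩, q, hpq.1.2⟩, fun ⟨⟨p, hp⟩, q, hq⟩ => ⟨p, q, ?_⟩⟩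
  exact inter_extremePoints_subset_extremePoints_of_subset (hT p q) ⟨⟨hp, hq⟩, hx⟩

theorem stmt_0_general (n : ℕ)
    (D1 D2 : Type) [Fintype D1] [Fintype D2]
    (C1 : D1 → Set (Fin n → ℝ)) (C2 : D2 → Set (Fin n → ℝ))
    (hC1 : ∀ i, IsCompact (C1 i) ∧ Convex ℝ (C1 i))
    (hC2 : ∀ j, IsCompact (C2 j) ∧ Convex ℝ (C2 j)) :
    closure (convexHull ℝ ((⋃ i, C1 i) ∩ (⋃ j, C2 j)))
      = closure (convexHull ℝ (⋃ i, C1 i)) ∩ closure (convexHull ℝ (⋃ j, C2 j))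
    ↔ ∀ x ∈ Set.extremePoints ℝ
        (closure (convexHull ℝ (⋃ i, C1 i)) ∩ closure (convexHull ℝ (⋃ j, C2 j))),
        ∃ p q, x ∈ Set.extremePoints ℝ (C1 p ∩ C2 q) := by
  have hK₁ : IsCompact (⋃ i, C1 i) := isCompact_iUnion fun i => (hC1 i).1
  have hK₂ : IsCompact (⋃ j, C2 j) := isCompact_iUnion fun j => (hC2 j).1
  rw [hK₁.convexHull.isClosed.closure_eq, hK₂.convexHull.isClosed.closure_eq,
    (hK₁.inter_right hK₂.isClosed).convexHull.isClosed.closure_eq,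
    convexHull_inter_eq_inter_convexHull_iff hK₁ hK₂]
  have hpieces : ∀ p q, C1 p ∩ C2 q ⊆ convexHull ℝ (⋃ i, C1 i) ∩ convexHull ℝ (⋃ j, C2 j) :=
    fun p q => inter_subset_inter ((subset_iUnion C1 p).trans (subset_convexHull ℝ _))
      ((subset_iUnion C2 q).trans (subset_convexHull ℝ _))
  exact forall₂_congr fun x hx => (exists_mem_extremePoints_inter_iff hpieces hx).symm

/-- Balas's condition for a basic step to be ineffective.
`T_L = clconv(F₁ ∩ F₂)` equals `T_R = clconv(F₁) ∩ clconv(F₂)` iff every extreme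
point of `T_R` is an extreme point of `C_{1p} ∩ C_{2q}` for some `(p,q)`. -/
theorem stmt_0 (n : ℕ) (hn : 1 ≤ n)
    (D1 D2 : Type) [Fintype D1] [Fintype D2] [Nonempty D1] [Nonempty D2]
    (C1 : D1 → Set (Fin n → ℝ)) (C2 : D2 → Set (Fin n → ℝ))
    (hC1 : ∀ i, IsCompact (C1 i) ∧ Convex ℝ (C1 i))
    (hC2 : ∀ j, IsCompact (C2 j) ∧ Convex ℝ (C2 j)) :
    closure (convexHull ℝ ((⋃ i, C1 i) ∩ (⋃ j, C2 j)))
      = closure (convexHull ℝ (⋃ i, C1 i)) ∩ closure (convexHull ℝ (⋃ j, C2 j))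
    ↔ ∀ x ∈ Set.extremePoints ℝ
        (closure (convexHull ℝ (⋃ i, C1 i)) ∩ closure (convexHull ℝ (⋃ j, C2 j))),
        ∃ p q, x ∈ Set.extremePoints ℝ (C1 p ∩ C2 q) :=
  stmt_0_general n D1 D2 C1 C2 hC1 hC2
end

section
/- Guaranteed bound improvement from a basic step: suppose K ≥ 2, and let λ*₁,…,λ*_K ∈ ℝⁿ with ∑_k λ*_k = c be optimal multipliers to the hull relaxation, i.e., LR(λ*) = z^HR. Assume F_{K−1} ∩ F_K ≠ ∅ and that the set H = (⋂_{k=1}^{K−2} clconv(F_k)) ∩ clconv(F_{K−1} ∩ F_K) is nonempty. Let z_Q^HR = inf{cᵀx : x ∈ H} be the hull relaxation value after a basic step between disjunctions K−1 and K, and let L = ∑_{k=1}^{K−2} inf{λ*_kᵀv : v ∈ F_k} + inf{(λ*_{K−1} + λ*_K)ᵀv : v ∈ F_{K−1} ∩ F_K}. Then the bound improvement Δ = z_Q^HR − z^HR satisfies Δ ≥ L − LR(λ*) ≥ 0. -/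
open Matrix

private lemma dot_cont' {n : ℕ} (w : Fin n → ℝ) : Continuous fun v : Fin n → ℝ => w ⬝ᵥ v := by
  unfold dotProduct
  exact continuous_finset_sum _ fun i _ => continuous_const.mul (continuous_apply i)

private lemma setEq' {n : ℕ} (S : Set (Fin n → ℝ)) (w : Fin n → ℝ) :
    {r : ℝ | ∃ v ∈ S, r = w ⬝ᵥ v} = (fun v => w ⬝ᵥ v) '' S := by
  ext r; constructor
  · rintro ⟨v, hv, rfl⟩; exact ⟨v, hv, rfl⟩
  · rintro ⟨v, hv, rfl⟩; exact ⟨v, hv, rfl⟩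

private lemma bdd' {n : ℕ} (S : Set (Fin n → ℝ)) (hS : IsCompact S) (w : Fin n → ℝ) :
    BddBelow {r : ℝ | ∃ v ∈ S, r = w ⬝ᵥ v} := by
  rw [setEq']; exact (hS.image (dot_cont' w)).bddBelow

private lemma key' {n : ℕ} (S : Set (Fin n → ℝ)) (hS : IsCompact S)
    (w : Fin n → ℝ) {x : Fin n → ℝ} (hx : x ∈ closure (convexHull ℝ S)) :
    sInf {r : ℝ | ∃ v ∈ S, r = w ⬝ᵥ v} ≤ w ⬝ᵥ x := by
  set I := sInf {r : ℝ | ∃ v ∈ S, r = w ⬝ᵥ v} with hI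
  have hsub : S ⊆ {y | I ≤ w ⬝ᵥ y} := fun v hv => csInf_le (bdd' S hS w) ⟨v, hv, rfl⟩
  have hconv : Convex ℝ {y : Fin n → ℝ | I ≤ w ⬝ᵥ y} := by
    apply convex_halfSpace_ge
    exact ⟨fun a b => by simp [dotProduct_add],
      fun c a => by simp [dotProduct_smul, smul_eq_mul]⟩
  have hclosed : IsClosed {y : Fin n → ℝ | I ≤ w ⬝ᵥ y} :=
    isClosed_le continuous_const (dot_cont' w)
  exact closure_minimal (convexHull_min hsub hconv) hclosed hx

private lemma cpt_of_union {n : ℕ} {S : Set (Fin n → ℝ)}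
    (h : ∃ (s : ℕ) (C : Fin (s + 1) → Set (Fin n → ℝ)),
      (∀ i, (C i).Nonempty ∧ IsCompact (C i) ∧ Convex ℝ (C i)) ∧ S = ⋃ i, C i) :
    IsCompact S ∧ S.Nonempty := by
  obtain ⟨s, C, hC, rfl⟩ := h
  constructor
  · exact isCompact_iUnion fun i => (hC i).2.1
  · obtain ⟨v, hv⟩ := (hC 0).1
    exact ⟨v, Set.mem_iUnion.2 ⟨0, hv⟩⟩

/-- Guaranteed bound improvement from a basic step.  The `K = m + 2`
disjunctions are modelled as `F 0, …, F (m-1)` (the first `K-2`) together with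
`A` and `B` (disjunctions `K-1` and `K`).  If the optimal multipliers
`(λ, α, β)` with `∑ λ_k + α + β = c` satisfy `LR(λ*) = z^HR`, then the bound
improvement `Δ = z_Q^HR − z^HR` of a basic step between the last two
disjunctions satisfies `Δ ≥ L − LR(λ*) ≥ 0`, where
`L = ∑_k inf{λ_kᵀv : v ∈ F_k} + inf{(α+β)ᵀv : v ∈ A ∩ B}`. -/
theorem stmt_6 (n m : ℕ) (hn : 1 ≤ n)
    (c : Fin n → ℝ) (F : Fin m → Set (Fin n → ℝ)) (A B : Set (Fin n → ℝ))
    (hF : ∀ k, ∃ (s : ℕ) (C : Fin (s + 1) → Set (Fin n → ℝ)),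
      (∀ i, (C i).Nonempty ∧ IsCompact (C i) ∧ Convex ℝ (C i)) ∧ F k = ⋃ i, C i)
    (hA : ∃ (s : ℕ) (C : Fin (s + 1) → Set (Fin n → ℝ)),
      (∀ i, (C i).Nonempty ∧ IsCompact (C i) ∧ Convex ℝ (C i)) ∧ A = ⋃ i, C i)
    (hB : ∃ (s : ℕ) (C : Fin (s + 1) → Set (Fin n → ℝ)),
      (∀ i, (C i).Nonempty ∧ IsCompact (C i) ∧ Convex ℝ (C i)) ∧ B = ⋃ i, C i)
    (lam : Fin m → (Fin n → ℝ)) (alpha beta : Fin n → ℝ)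
    (hsum : (∑ k, lam k) + alpha + beta = c)
    (hHRne : ((⋂ k, closure (convexHull ℝ (F k))) ∩ closure (convexHull ℝ A)
        ∩ closure (convexHull ℝ B)).Nonempty)
    (hopt : (∑ k, sInf {r : ℝ | ∃ v ∈ F k, r = (lam k) ⬝ᵥ v})
        + sInf {r : ℝ | ∃ v ∈ A, r = alpha ⬝ᵥ v}
        + sInf {r : ℝ | ∃ v ∈ B, r = beta ⬝ᵥ v}
      = sInf {r : ℝ | ∃ x ∈ (⋂ k, closure (convexHull ℝ (F k)))
          ∩ closure (convexHull ℝ A) ∩ closure (convexHull ℝ B), r = c ⬝ᵥ x})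
    (hABne : (A ∩ B).Nonempty)
    (hHne : ((⋂ k, closure (convexHull ℝ (F k)))
        ∩ closure (convexHull ℝ (A ∩ B))).Nonempty) :
    sInf {r : ℝ | ∃ x ∈ (⋂ k, closure (convexHull ℝ (F k)))
          ∩ closure (convexHull ℝ (A ∩ B)), r = c ⬝ᵥ x}
      - sInf {r : ℝ | ∃ x ∈ (⋂ k, closure (convexHull ℝ (F k)))
          ∩ closure (convexHull ℝ A) ∩ closure (convexHull ℝ B), r = c ⬝ᵥ x}
      ≥ ((∑ k, sInf {r : ℝ | ∃ v ∈ F k, r = (lam k) ⬝ᵥ v})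
          + sInf {r : ℝ | ∃ v ∈ A ∩ B, r = (alpha + beta) ⬝ᵥ v})
        - ((∑ k, sInf {r : ℝ | ∃ v ∈ F k, r = (lam k) ⬝ᵥ v})
          + sInf {r : ℝ | ∃ v ∈ A, r = alpha ⬝ᵥ v}
          + sInf {r : ℝ | ∃ v ∈ B, r = beta ⬝ᵥ v})
    ∧ ((∑ k, sInf {r : ℝ | ∃ v ∈ F k, r = (lam k) ⬝ᵥ v})
          + sInf {r : ℝ | ∃ v ∈ A ∩ B, r = (alpha + beta) ⬝ᵥ v})
        - ((∑ k, sInf {r : ℝ | ∃ v ∈ F k, r = (lam k) ⬝ᵥ v})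
          + sInf {r : ℝ | ∃ v ∈ A, r = alpha ⬝ᵥ v}
          + sInf {r : ℝ | ∃ v ∈ B, r = beta ⬝ᵥ v}) ≥ 0 := by
  -- compactness and nonemptiness facts
  have hFc : ∀ k, IsCompact (F k) ∧ (F k).Nonempty := fun k => cpt_of_union (hF k)
  obtain ⟨hAc, hAne⟩ := cpt_of_union hA
  obtain ⟨hBc, hBne⟩ := cpt_of_union hB
  have hABc : IsCompact (A ∩ B) := hAc.inter hBc
  -- second claim: L_AB ≥ a + b
  have claim2 : sInf {r : ℝ | ∃ v ∈ A, r = alpha ⬝ᵥ v}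
      + sInf {r : ℝ | ∃ v ∈ B, r = beta ⬝ᵥ v}
      ≤ sInf {r : ℝ | ∃ v ∈ A ∩ B, r = (alpha + beta) ⬝ᵥ v} := by
    refine le_csInf ⟨(alpha + beta) ⬝ᵥ hABne.choose, hABne.choose, hABne.choose_spec, rfl⟩ ?_
    rintro r ⟨v, ⟨hvA, hvB⟩, rfl⟩
    have h1 : sInf {r : ℝ | ∃ v ∈ A, r = alpha ⬝ᵥ v} ≤ alpha ⬝ᵥ v :=
      csInf_le (bdd' A hAc alpha) ⟨v, hvA, rfl⟩
    have h2 : sInf {r : ℝ | ∃ v ∈ B, r = beta ⬝ᵥ v} ≤ beta ⬝ᵥ v :=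
      csInf_le (bdd' B hBc beta) ⟨v, hvB, rfl⟩
    have : (alpha + beta) ⬝ᵥ v = alpha ⬝ᵥ v + beta ⬝ᵥ v := add_dotProduct _ _ _
    linarith
  -- weak duality for the new relaxation
  have claim1 : (∑ k, sInf {r : ℝ | ∃ v ∈ F k, r = (lam k) ⬝ᵥ v})
      + sInf {r : ℝ | ∃ v ∈ A ∩ B, r = (alpha + beta) ⬝ᵥ v}
      ≤ sInf {r : ℝ | ∃ x ∈ (⋂ k, closure (convexHull ℝ (F k)))
          ∩ closure (convexHull ℝ (A ∩ B)), r = c ⬝ᵥ x} := by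
    refine le_csInf ⟨c ⬝ᵥ hHne.choose, hHne.choose, hHne.choose_spec, rfl⟩ ?_
    rintro r ⟨x, ⟨hxF, hxAB⟩, rfl⟩
    have hsplit : c ⬝ᵥ x = (∑ k, lam k ⬝ᵥ x) + alpha ⬝ᵥ x + beta ⬝ᵥ x := by
      rw [← hsum, add_dotProduct, add_dotProduct]
      congr 2
      simp [dotProduct, Finset.sum_apply, Finset.sum_mul]
      rw [Finset.sum_comm]
    have hsumle : (∑ k, sInf {r : ℝ | ∃ v ∈ F k, r = (lam k) ⬝ᵥ v})
        ≤ ∑ k, lam k ⬝ᵥ x := by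
      apply Finset.sum_le_sum
      intro k _
      exact key' (F k) (hFc k).1 (lam k) (Set.mem_iInter.1 hxF k)
    have hABle : sInf {r : ℝ | ∃ v ∈ A ∩ B, r = (alpha + beta) ⬝ᵥ v}
        ≤ (alpha + beta) ⬝ᵥ x := key' (A ∩ B) hABc (alpha + beta) hxAB
    have : (alpha + beta) ⬝ᵥ x = alpha ⬝ᵥ x + beta ⬝ᵥ x := add_dotProduct _ _ _
    linarith
  constructor
  · rw [← hopt]
    linarith
  · linarith
end

section
/- Hierarchy of relaxations for pseudo basic steps: let λ₁,…,λ_K ∈ ℝⁿ with ∑_{k∈𝒦} λ_k = c, let 𝒫 = {J₁,…,J_P} be a partition of 𝒦 into nonempty sets with each G_p = ⋂_{k∈J_p} F_k nonempty, and assume ⋂_{k∈𝒦} F_k ≠ ∅. Define z_Q^HR = inf{cᵀx : x ∈ ⋂_{p=1}^P clconv(G_p)} and z_Q^LD = sup{∑_{p=1}^P inf{μ_pᵀv : v ∈ G_p} : μ₁,…,μ_P ∈ ℝⁿ, ∑_p μ_p = c}. Then z* = L_{⟨𝒦⟩}(c) ≥ z_Q^HR ≥ z_Q^LD ≥ L_𝒫(∑_{j∈J₁}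 λ_j, …, ∑_{j∈J_P} λ_j) ≥ LR(λ), where L_{⟨𝒦⟩}(c) denotes the partition relaxation value for the trivial partition {𝒦} with vector c. -/
open Matrix

private lemma aux_img {n : ℕ} (μ : Fin n → ℝ) (S : Set (Fin n → ℝ)) :
    {r : ℝ | ∃ v ∈ S, r = μ ⬝ᵥ v} = (fun v => μ ⬝ᵥ v) '' S := by
  ext r
  constructor
  · rintro ⟨v, hv, rfl⟩; exact ⟨v, hv, rfl⟩
  · rintro ⟨v, hv, rfl⟩; exact ⟨v, hv, rfl⟩

private lemma aux_cont {n : ℕ} (μ : Fin n → ℝ) :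
    Continuous fun v : Fin n → ℝ => μ ⬝ᵥ v := by
  unfold dotProduct
  exact continuous_finset_sum _ fun i _ => continuous_const.mul (continuous_apply i)

private lemma aux_linear {n : ℕ} (μ : Fin n → ℝ) :
    IsLinearMap ℝ fun v : Fin n → ℝ => μ ⬝ᵥ v :=
  ⟨fun x y => dotProduct_add μ x y, fun r x => by rw [dotProduct_smul]⟩

private lemma aux_bdd {n : ℕ} (μ : Fin n → ℝ) {S : Set (Fin n → ℝ)} (hS : IsCompact S) :
    BddBelow {r : ℝ | ∃ v ∈ S, r = μ ⬝ᵥ v} := by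
  rw [aux_img]
  exact (hS.image (aux_cont μ)).bddBelow

private lemma aux_le {n : ℕ} (μ : Fin n → ℝ) {S : Set (Fin n → ℝ)} (hS : IsCompact S)
    {v : Fin n → ℝ} (hv : v ∈ S) :
    sInf {r : ℝ | ∃ v ∈ S, r = μ ⬝ᵥ v} ≤ μ ⬝ᵥ v :=
  csInf_le (aux_bdd μ hS) ⟨v, hv, rfl⟩

private lemma aux_clconv {n : ℕ} (μ : Fin n → ℝ) {S : Set (Fin n → ℝ)} (hS : IsCompact S)
    {x : Fin n → ℝ} (hx : x ∈ closure (convexHull ℝ S)) :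
    sInf {r : ℝ | ∃ v ∈ S, r = μ ⬝ᵥ v} ≤ μ ⬝ᵥ x := by
  set m := sInf {r : ℝ | ∃ v ∈ S, r = μ ⬝ᵥ v} with hm
  have h1 : S ⊆ {v | m ≤ μ ⬝ᵥ v} := fun v hv => aux_le μ hS hv
  have h2 : convexHull ℝ S ⊆ {v | m ≤ μ ⬝ᵥ v} :=
    convexHull_min h1 (convex_halfSpace_ge (aux_linear μ) m)
  have h3 : closure (convexHull ℝ S) ⊆ {v | m ≤ μ ⬝ᵥ v} :=
    closure_minimal h2 (isClosed_le continuous_const (aux_cont μ))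
  exact h3 hx

private lemma aux_sum_dot {n : ℕ} {ι : Type*} (s : Finset ι) (w : ι → Fin n → ℝ)
    (x : Fin n → ℝ) : (∑ j ∈ s, w j) ⬝ᵥ x = ∑ j ∈ s, (w j) ⬝ᵥ x := by
  simp only [dotProduct, Finset.sum_apply, Finset.sum_mul]
  rw [Finset.sum_comm]

private lemma aux_sum_partition {K P : ℕ} (J : Fin P → Finset (Fin K))
    (hpart : ∀ k : Fin K, ∃! p : Fin P, k ∈ J p)
    {M : Type*} [AddCommMonoid M] (g : Fin K → M) :
    ∑ p, ∑ j ∈ J p, g j = ∑ k, g k := by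
  have hdisj : (↑(Finset.univ : Finset (Fin P)) : Set (Fin P)).PairwiseDisjoint J := by
    intro p _ q _ hpq
    simp only [Function.onFun, Finset.disjoint_left]
    intro k hkp hkq
    obtain ⟨p', _, hu⟩ := hpart k
    exact hpq ((hu p hkp).trans (hu q hkq).symm)
  have huniv : (Finset.univ : Finset (Fin P)).biUnion J = Finset.univ := by
    ext k
    simp only [Finset.mem_biUnion, Finset.mem_univ, true_and, iff_true]
    exact (hpart k).exists
  rw [← Finset.sum_biUnion hdisj, huniv]

/-- Hierarchy of relaxations for pseudo basic steps:
`z* = L_{⟨𝒦⟩}(c) ≥ z_Q^HR ≥ z_Q^LD ≥ L_𝒫(∑_{j∈J₁} λ_j,…,∑_{j∈J_P} λ_j) ≥ LR(λ)`. -/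
theorem stmt_7 (n K : ℕ) (hn : 1 ≤ n) (hK : 1 ≤ K)
    (c : Fin n → ℝ) (F : Fin K → Set (Fin n → ℝ))
    (hF : ∀ k, ∃ (m : ℕ) (C : Fin (m + 1) → Set (Fin n → ℝ)),
      (∀ i, (C i).Nonempty ∧ IsCompact (C i) ∧ Convex ℝ (C i)) ∧ F k = ⋃ i, C i)
    (lam : Fin K → (Fin n → ℝ)) (hsum : (∑ k, lam k) = c)
    (P : ℕ) (hP : 1 ≤ P) (J : Fin P → Finset (Fin K))
    (hJne : ∀ p, (J p).Nonempty)
    (hpart : ∀ k : Fin K, ∃! p : Fin P, k ∈ J p)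
    (hGne : ∀ p, (⋂ k ∈ J p, F k).Nonempty)
    (hcap : (⋂ k, F k).Nonempty) :
    sInf {r : ℝ | ∃ x ∈ ⋂ k, F k, r = c ⬝ᵥ x}
      = sInf {r : ℝ | ∃ v ∈ ⋂ k, F k, r = c ⬝ᵥ v} ∧
    sInf {r : ℝ | ∃ v ∈ ⋂ k, F k, r = c ⬝ᵥ v}
      ≥ sInf {r : ℝ | ∃ x ∈ ⋂ p, closure (convexHull ℝ (⋂ k ∈ J p, F k)), r = c ⬝ᵥ x} ∧
    sInf {r : ℝ | ∃ x ∈ ⋂ p, closure (convexHull ℝ (⋂ k ∈ J p, F k)), r = c ⬝ᵥ x}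
      ≥ sSup {L : ℝ | ∃ mu : Fin P → (Fin n → ℝ), (∑ p, mu p) = c ∧
          L = ∑ p, sInf {r : ℝ | ∃ v ∈ ⋂ k ∈ J p, F k, r = (mu p) ⬝ᵥ v}} ∧
    sSup {L : ℝ | ∃ mu : Fin P → (Fin n → ℝ), (∑ p, mu p) = c ∧
          L = ∑ p, sInf {r : ℝ | ∃ v ∈ ⋂ k ∈ J p, F k, r = (mu p) ⬝ᵥ v}}
      ≥ ∑ p, sInf {r : ℝ | ∃ v ∈ ⋂ k ∈ J p, F k, r = (∑ j ∈ J p, lam j) ⬝ᵥ v} ∧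
    (∑ p, sInf {r : ℝ | ∃ v ∈ ⋂ k ∈ J p, F k, r = (∑ j ∈ J p, lam j) ⬝ᵥ v})
      ≥ ∑ k, sInf {r : ℝ | ∃ v ∈ F k, r = (lam k) ⬝ᵥ v} := by
  classical
  -- Basic compactness facts
  have hFc : ∀ k, IsCompact (F k) := by
    intro k
    obtain ⟨m, C, hC, hEq⟩ := hF k
    rw [hEq]
    exact isCompact_iUnion fun i => (hC i).2.1
  have hGc : ∀ p, IsCompact (⋂ k ∈ J p, F k) := by
    intro p
    obtain ⟨k₀, hk₀⟩ := hJne p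
    refine IsCompact.of_isClosed_subset (hFc k₀)
      (isClosed_biInter fun k _ => (hFc k).isClosed) ?_
    exact Set.biInter_subset_of_mem hk₀
  -- Every point of ⋂ F k lies in each G p and hence in Q
  obtain ⟨x₀, hx₀⟩ := hcap
  have hx₀G : ∀ p, x₀ ∈ ⋂ k ∈ J p, F k := fun p =>
    Set.mem_iInter₂.2 fun k _ => Set.mem_iInter.1 hx₀ k
  have hx₀Q : x₀ ∈ ⋂ p, closure (convexHull ℝ (⋂ k ∈ J p, F k)) :=
    Set.mem_iInter.2 fun p => subset_closure (subset_convexHull ℝ _ (hx₀G p))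
  -- For any mu summing to c and any x ∈ Q : ∑ p, sInf(G p, mu p) ≤ c ⬝ᵥ x
  have key : ∀ (mu : Fin P → (Fin n → ℝ)), (∑ p, mu p) = c →
      ∀ x ∈ ⋂ p, closure (convexHull ℝ (⋂ k ∈ J p, F k)),
      (∑ p, sInf {r : ℝ | ∃ v ∈ ⋂ k ∈ J p, F k, r = (mu p) ⬝ᵥ v}) ≤ c ⬝ᵥ x := by
    intro mu hmu x hx
    rw [← hmu, aux_sum_dot]
    exact Finset.sum_le_sum fun p _ =>
      aux_clconv (mu p) (hGc p) (Set.mem_iInter.1 hx p)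
  -- mu₀ is the aggregated multiplier
  set mu₀ : Fin P → (Fin n → ℝ) := fun p => ∑ j ∈ J p, lam j with hmu₀
  have hmu₀sum : (∑ p, mu₀ p) = c := by
    rw [hmu₀, aux_sum_partition J hpart lam, hsum]
  -- HR set facts
  have hHRne : {r : ℝ | ∃ x ∈ ⋂ p, closure (convexHull ℝ (⋂ k ∈ J p, F k)), r = c ⬝ᵥ x}.Nonempty :=
    ⟨c ⬝ᵥ x₀, x₀, hx₀Q, rfl⟩
  have hHRbdd : BddBelow {r : ℝ | ∃ x ∈ ⋂ p, closure (convexHull ℝ (⋂ k ∈ J p, F k)), r = c ⬝ᵥ x} := by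
    refine ⟨∑ p, sInf {r : ℝ | ∃ v ∈ ⋂ k ∈ J p, F k, r = (mu₀ p) ⬝ᵥ v}, ?_⟩
    rintro r ⟨x, hx, rfl⟩
    exact key mu₀ hmu₀sum x hx
  refine ⟨rfl, ?_, ?_, ?_, ?_⟩
  · -- z* ≥ z_HR
    refine csInf_le_csInf hHRbdd ⟨c ⬝ᵥ x₀, x₀, hx₀, rfl⟩ ?_
    rintro r ⟨x, hx, rfl⟩
    refine ⟨x, Set.mem_iInter.2 fun p => subset_closure (subset_convexHull ℝ _ ?_), rfl⟩
    exact Set.mem_iInter₂.2 fun k _ => Set.mem_iInter.1 hx k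
  · -- z_HR ≥ z_LD
    refine csSup_le ⟨_, mu₀, hmu₀sum, rfl⟩ ?_
    rintro L ⟨mu, hmu, rfl⟩
    refine le_csInf hHRne ?_
    rintro r ⟨x, hx, rfl⟩
    exact key mu hmu x hx
  · -- z_LD ≥ L_P(mu₀)
    refine le_csSup ?_ ⟨mu₀, hmu₀sum, rfl⟩
    refine ⟨c ⬝ᵥ x₀, ?_⟩
    rintro L ⟨mu, hmu, rfl⟩
    exact key mu hmu x₀ hx₀Q
  · -- L_P(mu₀) ≥ LR(lam)
    rw [ge_iff_le, ← aux_sum_partition J hpart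
      (fun k => sInf {r : ℝ | ∃ v ∈ F k, r = (lam k) ⬝ᵥ v})]
    refine Finset.sum_le_sum fun p _ => ?_
    obtain ⟨v₀, hv₀⟩ := hGne p
    refine le_csInf ⟨_, v₀, hv₀, rfl⟩ ?_
    rintro r ⟨v, hv, rfl⟩
    have hvF : ∀ j ∈ J p, v ∈ F j := fun j hj => Set.mem_iInter₂.1 hv j hj
    rw [aux_sum_dot]
    exact Finset.sum_le_sum fun j hj => aux_le (lam j) (hFc j) (hvF j hj)
end
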